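/- arXiv:cs/0210008 — 9 statements merged into one kernel-verified Lean document; each statement's English description precedes it below -/
import Mathlib

section
/- Let f be an ECA with half-limited sensibility with constant k: for every n ≥ 1 there is a finite set S of indices in Fin n with |S| ≤ k such that for all u, u' : Fin n → Bool agreeing on S, all c : Bool and all v : Fin n → Bool, f^n(u,c,v) = f^n(u',c,v). Then for every n ≥ 1 and every c : Bool, the number of distinct rows of M_c^n is at most 2^k and the number of distinct columns of M_c^n is at most 2^(2^k); consequently d_n(f) ≤ 2^(2^k) for all n, so f is in the bounded complexity class. -/
/-- The `n`-th iterate of a one-dimensional CA local rule `f`, applied to an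
assignment `x` of states to integer positions. It only depends on positions `-n,…,n`:
`caIter f 1 x = f (x (-1)) (x 0) (x 1)` and
`caIter f (n+1) x = f (caIter f n (x shifted left)) (caIter f n x) (caIter f n (x shifted right))`. -/
def caIter {Q : Type*} (f : Q → Q → Q → Q) : ℕ → (ℤ → Q) → Q
  | 0, x => x 0
  | n + 1, x =>
      f (caIter f n fun i => x (i - 1)) (caIter f n x) (caIter f n fun i => x (i + 1))

/-- The assignment of states to integer positions determined by left cells `u`
(`u i` at position `-(i+1)`), center `c` (position `0`) and right cells `v`
(`v i` at position `i+1`); positions outside `-n,…,n` (irrelevant for `caIter f n`)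
are padded with `c`. -/
def caEmbed {Q : Type*} (n : ℕ) (u : Fin n → Q) (c : Q) (v : Fin n → Q) : ℤ → Q :=
  fun i =>
    if h : 1 ≤ i ∧ i ≤ (n : ℤ) then v ⟨(i - 1).toNat, by omega⟩
    else if h' : 1 ≤ -i ∧ -i ≤ (n : ℤ) then u ⟨(-i - 1).toNat, by omega⟩
    else c

/-- `f^n(u, c, v)`. -/
def caApply {Q : Type*} (f : Q → Q → Q → Q) (n : ℕ) (u : Fin n → Q) (c : Q)
    (v : Fin n → Q) : Q :=
  caIter f n (caEmbed n u c v)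

/-- Number of distinct rows of the matrix `M_c^n`. -/
noncomputable def caRows {Q : Type*} (f : Q → Q → Q → Q) (n : ℕ) (c : Q) : ℕ :=
  Set.ncard {g : (Fin n → Q) → Q | ∃ u : Fin n → Q, g = fun v => caApply f n u c v}

/-- Number of distinct columns of the matrix `M_c^n`. -/
noncomputable def caCols {Q : Type*} (f : Q → Q → Q → Q) (n : ℕ) (c : Q) : ℕ :=
  Set.ncard {g : (Fin n → Q) → Q | ∃ v : Fin n → Q, g = fun u => caApply f n u c v}

/-- `d_n(f)` for an ECA `f`. -/
noncomputable def dnECA (f : Bool → Bool → Bool → Bool) (n : ℕ) : ℕ :=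
  max (max (caRows f n false) (caCols f n false)) (max (caRows f n true) (caCols f n true))

/-! Half-limited sensibility gives a set `S` of at most `k` left cells such that `f^n(u, c, v)`
depends on `u` only through `u|_S`. Hence a row of `M_c^n` is determined by `u|_S`, which allows
at most `2^k` rows, and each column is a Boolean function of `u|_S`, which allows at most
`2^(2^k)` columns. -/

open Function Set

theorem Set.ncard_range_le {α β : Type*} [Finite α] (f : α → β) :
    (range f).ncard ≤ Nat.card α := by
  rw [← Nat.card_coe_set_eq]
  exact Finite.card_range_le f

theorem Function.FactorsThrough.ncard_range_le {X P W : Type*} [Finite P] {F : X → W}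
    {π : X → P} (hF : F.FactorsThrough π) : (range F).ncard ≤ Nat.card P := by
  rcases isEmpty_or_nonempty X with _ | ⟨⟨x₀⟩⟩
  · simp [range_eq_empty]
  · calc (range F).ncard ≤ (range (extend π F fun _ => F x₀)).ncard := by
          refine ncard_le_ncard ?_
          rintro _ ⟨x, rfl⟩
          exact ⟨π x, hF.extend_apply _ x⟩
      _ ≤ Nat.card P := Set.ncard_range_le _

theorem Function.ncard_setOf_factorsThrough_le {X P Z : Type*} [Finite P] [Finite Z] [Nonempty Z]
    (π : X → P) : {h : X → Z | h.FactorsThrough π}.ncard ≤ Nat.card (P → Z) := by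
  calc {h : X → Z | h.FactorsThrough π}.ncard ≤ (range fun e : P → Z => e ∘ π).ncard := by
        refine ncard_le_ncard fun h hh => ?_
        obtain ⟨e, rfl⟩ := (factorsThrough_iff h).mp hh
        exact ⟨e, rfl⟩
    _ ≤ Nat.card (P → Z) := Set.ncard_range_le _

section CellularAutomaton

variable {Q : Type*} (f : Q → Q → Q → Q) (n : ℕ) (c : Q)

theorem caRows_eq_ncard_range : caRows f n c = (range fun u v => caApply f n u c v).ncard := by
  simp only [caRows, range, eq_comm]

theorem caCols_eq_ncard_range : caCols f n c = (range fun v u => caApply f n u c v).ncard := by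
  simp only [caCols, range, eq_comm]

variable {f n c} [Finite Q] {S : Finset (Fin n)}

theorem caRows_le_of_dependsOn (hS : ∀ v, DependsOn (fun u => caApply f n u c v) S) :
    caRows f n c ≤ Nat.card Q ^ S.card := by
  have hrow : DependsOn (fun u v => caApply f n u c v) S := fun _ _ h => funext fun v => hS v h
  rw [caRows_eq_ncard_range]
  calc _ ≤ Nat.card (S → Q) := (dependsOn_iff_factorsThrough.mp hrow).ncard_range_le
    _ = Nat.card Q ^ S.card := by simp [Nat.card_fun]

theorem caCols_le_of_dependsOn (hS : ∀ v, DependsOn (fun u => caApply f n u c v) S) :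
    caCols f n c ≤ Nat.card Q ^ Nat.card Q ^ S.card := by
  have : Nonempty Q := ⟨c⟩
  rw [caCols_eq_ncard_range]
  calc _ ≤ {h : (Fin n → Q) → Q | h.FactorsThrough (S : Set (Fin n)).domRestrict}.ncard := by
        refine ncard_le_ncard ?_
        rintro _ ⟨v, rfl⟩
        exact dependsOn_iff_factorsThrough.mp (hS v)
    _ ≤ Nat.card ((S → Q) → Q) := ncard_setOf_factorsThrough_le _
    _ = Nat.card Q ^ Nat.card Q ^ S.card := by simp [Nat.card_fun]

end CellularAutomaton

theorem dnECA_le {f : Bool → Bool → Bool → Bool} {n m : ℕ}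
    (h : ∀ c, caRows f n c ≤ m ∧ caCols f n c ≤ m) : dnECA f n ≤ m := by
  simp only [dnECA, max_le_iff]
  exact ⟨h false, h true⟩

/-- An ECA with half-limited sensibility (with constant `k`) has, for every `n ≥ 1` and
`c : Bool`, at most `2^k` distinct rows and at most `2^(2^k)` distinct columns in `M_c^n`;
consequently `d_n(f) ≤ 2^(2^k)`, i.e. `f` is in the bounded complexity class. -/
theorem halfLimitedSensibility_bounded (f : Bool → Bool → Bool → Bool) (k : ℕ)
    (hsens : ∀ n : ℕ, 1 ≤ n → ∃ S : Finset (Fin n), S.card ≤ k ∧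
      ∀ u u' : Fin n → Bool, (∀ i ∈ S, u i = u' i) →
        ∀ (c : Bool) (v : Fin n → Bool), caApply f n u c v = caApply f n u' c v) :
    ∀ n : ℕ, 1 ≤ n →
      (∀ c : Bool, caRows f n c ≤ 2 ^ k ∧ caCols f n c ≤ 2 ^ (2 ^ k)) ∧
      dnECA f n ≤ 2 ^ (2 ^ k) := by
  intro n hn
  obtain ⟨S, hSk, hS⟩ := hsens n hn
  have hdep (c : Bool) (v : Fin n → Bool) : DependsOn (fun u => caApply f n u c v) S :=
    fun u u' h => hS u u' h c v
  have hbounds (c : Bool) : caRows f n c ≤ 2 ^ k ∧ caCols f n c ≤ 2 ^ 2 ^ k := by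
    have hrows := caRows_le_of_dependsOn (hdep c)
    have hcols := caCols_le_of_dependsOn (hdep c)
    simp only [Nat.card_eq_fintype_card, Fintype.card_bool] at hrows hcols
    exact ⟨hrows.trans (Nat.pow_le_pow_right two_pos hSk),
      hcols.trans (Nat.pow_le_pow_right two_pos (Nat.pow_le_pow_right two_pos hSk))⟩
  have two_pow_le : 2 ^ k ≤ 2 ^ 2 ^ k := Nat.pow_le_pow_right two_pos Nat.lt_two_pow_self.le
  exact ⟨hbounds, dnECA_le fun c => ⟨(hbounds c).1.trans two_pow_le, (hbounds c).2⟩⟩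
end

section
/- Let f be an additive ECA with respect to operations ⊕, ⊗ and neutral element e. Then for every n ≥ 1 and all assignments w, w' of Boolean states to positions -n,…,n (with ⊕ and ⊗ applied pointwise to such assignments): if n is odd then f^n(w ⊕ w') = f^n(w) ⊗ f^n(w') and f^n(w ⊗ w') = f^n(w) ⊕ f^n(w'); if n is even then f^n(w ⊕ w') = f^n(w) ⊕ f^n(w') and f^n(w ⊗ w') = f^n(w) ⊗ f^n(w'). -/
/-- Additivity is preserved by iterations: if `f` is additive for `⊕`, `⊗` with neutral
element `e` (for `⊕`), then for odd `n` the iterate `f^n` turns pointwise `⊕` into `⊗`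
(and `⊗` into `⊕`), while for even `n` it preserves both operations. -/
theorem additive_iterate (f : Bool → Bool → Bool → Bool)
    (op1 op2 : Bool → Bool → Bool) (e : Bool)
    (hneut : ∀ x : Bool, op1 x e = x ∧ op1 e x = x)
    (hadd1 : ∀ x y z x' y' z' : Bool,
      f (op1 x x') (op1 y y') (op1 z z') = op2 (f x y z) (f x' y' z'))
    (hadd2 : ∀ x y z x' y' z' : Bool,
      f (op2 x x') (op2 y y') (op2 z z') = op1 (f x y z) (f x' y' z')) :
    ∀ n : ℕ, 1 ≤ n → ∀ w w' : ℤ → Bool,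
      (Odd n →
        caIter f n (fun i => op1 (w i) (w' i)) = op2 (caIter f n w) (caIter f n w') ∧
        caIter f n (fun i => op2 (w i) (w' i)) = op1 (caIter f n w) (caIter f n w')) ∧
      (Even n →
        caIter f n (fun i => op1 (w i) (w' i)) = op1 (caIter f n w) (caIter f n w') ∧
        caIter f n (fun i => op2 (w i) (w' i)) = op2 (caIter f n w) (caIter f n w')) := by
  intro n hn
  induction n with
  | zero => omega
  | succ m ih =>
    rcases Nat.eq_zero_or_pos m with hm | hm
    · subst hm
      intro w w'
      refine ⟨fun _ => ?_, fun h => absurd h (by simp)⟩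
      simp only [caIter]
      exact ⟨hadd1 _ _ _ _ _ _, hadd2 _ _ _ _ _ _⟩
    · intro w w'
      have IH := ih hm
      rcases Nat.even_or_odd m with hme | hmo
      · refine ⟨fun _ => ?_, fun h => by rw [Nat.even_iff] at h; rw [Nat.even_iff] at hme; omega⟩
        constructor
        · simp only [caIter]
          rw [show (fun i => (fun j => op1 (w j) (w' j)) (i - 1)) =
              (fun i => op1 ((fun j => w (j-1)) i) ((fun j => w' (j-1)) i)) from rfl,
            show (fun i => (fun j => op1 (w j) (w' j)) (i + 1)) =
              (fun i => op1 ((fun j => w (j+1)) i) ((fun j => w' (j+1)) i)) from rfl,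
            ((IH _ _).2 hme).1, ((IH _ _).2 hme).1, ((IH _ _).2 hme).1, hadd1]
        · simp only [caIter]
          rw [show (fun i => (fun j => op2 (w j) (w' j)) (i - 1)) =
              (fun i => op2 ((fun j => w (j-1)) i) ((fun j => w' (j-1)) i)) from rfl,
            show (fun i => (fun j => op2 (w j) (w' j)) (i + 1)) =
              (fun i => op2 ((fun j => w (j+1)) i) ((fun j => w' (j+1)) i)) from rfl,
            ((IH _ _).2 hme).2, ((IH _ _).2 hme).2, ((IH _ _).2 hme).2, hadd2]
      · refine ⟨fun h => by rw [Nat.odd_iff] at h hmo; omega, fun _ => ?_⟩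
        constructor
        · simp only [caIter]
          rw [show (fun i => (fun j => op1 (w j) (w' j)) (i - 1)) =
              (fun i => op1 ((fun j => w (j-1)) i) ((fun j => w' (j-1)) i)) from rfl,
            show (fun i => (fun j => op1 (w j) (w' j)) (i + 1)) =
              (fun i => op1 ((fun j => w (j+1)) i) ((fun j => w' (j+1)) i)) from rfl,
            ((IH _ _).1 hmo).1, ((IH _ _).1 hmo).1, ((IH _ _).1 hmo).1, hadd2]
        · simp only [caIter]
          rw [show (fun i => (fun j => op2 (w j) (w' j)) (i - 1)) =
              (fun i => op2 ((fun j => w (j-1)) i) ((fun j => w' (j-1)) i)) from rfl,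
            show (fun i => (fun j => op2 (w j) (w' j)) (i + 1)) =
              (fun i => op2 ((fun j => w (j+1)) i) ((fun j => w' (j+1)) i)) from rfl,
            ((IH _ _).1 hmo).2, ((IH _ _).1 hmo).2, ((IH _ _).1 hmo).2, hadd1]
end

section
/- Let f be an additive ECA. Then for every n ≥ 1 and every c : Bool, the matrix M_c^n has at most 2 distinct rows and at most 2 distinct columns; consequently d_n(f) ≤ 2 for all n ≥ 1. -/
section AuxAdditive

/-- A rank-one decomposition of a Bool-valued matrix gives at most 2 distinct rows. -/
lemma caNcard_le_two {α β : Type*} (M : α → β → Bool) (op : Bool → Bool → Bool)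
    (A : α → Bool) (B : β → Bool) (h : ∀ a b, M a b = op (A a) (B b)) :
    Set.ncard {g : β → Bool | ∃ a, g = fun b => M a b} ≤ 2 := by
  have hsub : {g : β → Bool | ∃ a, g = fun b => M a b}
      ⊆ {fun b => op false (B b), fun b => op true (B b)} := by
    rintro g ⟨a, rfl⟩
    simp only [Set.mem_insert_iff, Set.mem_singleton_iff]
    cases hA : A a
    · left; funext b; rw [h, hA]
    · right; funext b; rw [h, hA]
  refine le_trans (Set.ncard_le_ncard hsub (Set.toFinite _)) ?_
  refine le_trans (Set.ncard_insert_le _ _) ?_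
  simp [Set.ncard_singleton]

lemma caIter_hom (f : Bool → Bool → Bool → Bool) (op1 op2 : Bool → Bool → Bool)
    (hadd1 : ∀ x y z x' y' z' : Bool,
      f (op1 x x') (op1 y y') (op1 z z') = op2 (f x y z) (f x' y' z'))
    (hadd2 : ∀ x y z x' y' z' : Bool,
      f (op2 x x') (op2 y y') (op2 z z') = op1 (f x y z) (f x' y' z')) :
    ∀ n : ℕ, ∀ x y : ℤ → Bool,
      caIter f n (fun i => op1 (x i) (y i))
        = (if n % 2 = 0 then op1 else op2) (caIter f n x) (caIter f n y) ∧
      caIter f n (fun i => op2 (x i) (y i))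
        = (if n % 2 = 0 then op2 else op1) (caIter f n x) (caIter f n y) := by
  intro n
  induction n with
  | zero => intro x y; simp [caIter]
  | succ n ih =>
    intro x y
    simp only [caIter]
    rcases Nat.even_or_odd n with hn | hn
    · have h2 : n % 2 = 0 := Nat.even_iff.mp hn
      have h3 : (n + 1) % 2 = 1 := by omega
      constructor
      · rw [(ih (fun i => x (i - 1)) (fun i => y (i - 1))).1,
          (ih x y).1, (ih (fun i => x (i + 1)) (fun i => y (i + 1))).1]
        simp [h2, h3, hadd1]
      · rw [(ih (fun i => x (i - 1)) (fun i => y (i - 1))).2,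
          (ih x y).2, (ih (fun i => x (i + 1)) (fun i => y (i + 1))).2]
        simp [h2, h3, hadd2]
    · have h2 : n % 2 = 1 := Nat.odd_iff.mp hn
      have h3 : (n + 1) % 2 = 0 := by omega
      constructor
      · rw [(ih (fun i => x (i - 1)) (fun i => y (i - 1))).1,
          (ih x y).1, (ih (fun i => x (i + 1)) (fun i => y (i + 1))).1]
        simp [h2, h3, hadd2]
      · rw [(ih (fun i => x (i - 1)) (fun i => y (i - 1))).2,
          (ih x y).2, (ih (fun i => x (i + 1)) (fun i => y (i + 1))).2]
        simp [h2, h3, hadd1]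

/-- Splitting of the embedded configuration using the neutral element. -/
lemma caEmbed_split (op1 : Bool → Bool → Bool) (e : Bool)
    (hneut : ∀ x : Bool, op1 x e = x ∧ op1 e x = x)
    (n : ℕ) (u : Fin n → Bool) (c : Bool) (v : Fin n → Bool) :
    (fun i => op1 (caEmbed n u c (fun _ => e) i) (caEmbed n (fun _ => e) e v i))
      = caEmbed n u c v := by
  funext i
  simp only [caEmbed]
  split_ifs
  · exact (hneut _).2
  · exact (hneut _).1
  · exact (hneut _).1

end AuxAdditive

/-- If `f` is an additive ECA, then for every `n ≥ 1` and `c : Bool` the matrix `M_c^n`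
has at most 2 distinct rows and at most 2 distinct columns; consequently `d_n(f) ≤ 2`. -/
theorem additive_bounded (f : Bool → Bool → Bool → Bool)
    (op1 op2 : Bool → Bool → Bool) (e : Bool)
    (hneut : ∀ x : Bool, op1 x e = x ∧ op1 e x = x)
    (hadd1 : ∀ x y z x' y' z' : Bool,
      f (op1 x x') (op1 y y') (op1 z z') = op2 (f x y z) (f x' y' z'))
    (hadd2 : ∀ x y z x' y' z' : Bool,
      f (op2 x x') (op2 y y') (op2 z z') = op1 (f x y z) (f x' y' z')) :
    ∀ n : ℕ, 1 ≤ n →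
      (∀ c : Bool, caRows f n c ≤ 2 ∧ caCols f n c ≤ 2) ∧ dnECA f n ≤ 2 := by
  
  have key : ∀ n : ℕ, ∀ (c : Bool) (u v : Fin n → Bool),
      caApply f n u c v
        = (if n % 2 = 0 then op1 else op2)
            (caApply f n u c (fun _ => e)) (caApply f n (fun _ => e) e v) := by
    intro n c u v
    have := (caIter_hom f op1 op2 hadd1 hadd2 n
      (caEmbed n u c (fun _ => e)) (caEmbed n (fun _ => e) e v)).1
    rw [caEmbed_split op1 e hneut n u c v] at this
    exact this
  intro n hn
  have hrows : ∀ c : Bool, caRows f n c ≤ 2 := by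
    intro c
    exact caNcard_le_two (fun u v => caApply f n u c v)
      (if n % 2 = 0 then op1 else op2)
      (fun u => caApply f n u c (fun _ => e))
      (fun v => caApply f n (fun _ => e) e v)
      (fun u v => key n c u v)
  have hcols : ∀ c : Bool, caCols f n c ≤ 2 := by
    intro c
    exact caNcard_le_two (fun v u => caApply f n u c v)
      (fun x y => (if n % 2 = 0 then op1 else op2) y x)
      (fun v => caApply f n (fun _ => e) e v)
      (fun u => caApply f n u c (fun _ => e))
      (fun v u => key n c u v)
  refine ⟨fun c => ⟨hrows c, hcols c⟩, ?_⟩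
  simp only [dnECA, max_le_iff]
  exact ⟨⟨hrows false, hcols false⟩, hrows true, hcols true⟩
end

section
/- The ECA of Wolfram rule 105, f(x,c,y) = ¬(x XOR c XOR y), is additive with ⊕ = XOR (with neutral element false) and ⊗ = fun a b => ¬(a XOR b): for all x,y,z,x',y',z' : Bool, f(x XOR x', y XOR y', z XOR z') = ¬(f(x,y,z) XOR f(x',y',z')) and f(¬(x XOR x'), ¬(y XOR y'), ¬(z XOR z')) = f(x,y,z) XOR f(x',y',z'). Consequently, for every n ≥ 1 and every c : Bool, the matrix M_c^n of rule 105 has at most 2 distinct rows and at most 2 distinct columns. -/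
lemma boolid : ∀ a b c a' b' c' k1 k2 k3 : Bool,
    (!(xor (xor (xor (xor a a') k1) (xor (xor b b') k2)) (xor (xor c c') k3))) =
    xor (xor (!(xor (xor a b) c)) (!(xor (xor a' b') c'))) (!(xor (xor k1 k2) k3)) := by
  decide

lemma caIter_xor (f : Bool → Bool → Bool → Bool)
    (hf : ∀ x c y, f x c y = !(xor (xor x c) y)) :
    ∀ (n : ℕ) (x x' : ℤ → Bool),
      caIter f n (fun i => xor (x i) (x' i)) =
        xor (xor (caIter f n x) (caIter f n x')) (caIter f n (fun _ => false))
  | 0, x, x' => by simp [caIter]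
  | n+1, x, x' => by
      simp only [caIter, hf]
      rw [caIter_xor f hf n (fun i => x (i-1)) (fun i => x' (i-1)),
          caIter_xor f hf n x x',
          caIter_xor f hf n (fun i => x (i+1)) (fun i => x' (i+1))]
      exact boolid _ _ _ _ _ _ _ _ _

lemma caEmbed_xor (n : ℕ) (u u' : Fin n → Bool) (c : Bool) (v v' : Fin n → Bool) :
    (fun i => xor (caEmbed n u c v i) (caEmbed n u' c v' i)) =
      caEmbed n (fun j => xor (u j) (u' j)) false (fun j => xor (v j) (v' j)) := by
  funext i
  simp only [caEmbed]
  split_ifs <;> simp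

lemma caEmbed_zero (n : ℕ) :
    caEmbed n (fun _ => false) false (fun _ => false) = fun _ : ℤ => false := by
  funext i
  simp only [caEmbed]
  split_ifs <;> rfl

lemma key (f : Bool → Bool → Bool → Bool)
    (hf : ∀ x c y, f x c y = !(xor (xor x c) y))
    (n : ℕ) (c : Bool) (u u' v v' : Fin n → Bool) :
    caApply f n (fun j => xor (u j) (u' j)) false (fun j => xor (v j) (v' j)) =
      xor (xor (caApply f n u c v) (caApply f n u' c v'))
        (caApply f n (fun _ => false) false (fun _ => false)) := by
  unfold caApply
  rw [caEmbed_zero n, ← caEmbed_xor n u u' c v v']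
  exact caIter_xor f hf n _ _

lemma xor_self_fun (n : ℕ) (w : Fin n → Bool) :
    (fun j => xor (w j) (w j)) = fun _ : Fin n => false := by
  funext j; simp

lemma affine (f : Bool → Bool → Bool → Bool)
    (hf : ∀ x c y, f x c y = !(xor (xor x c) y))
    (n : ℕ) (c : Bool) (u v : Fin n → Bool) :
    caApply f n u c v =
      xor (xor (caApply f n (fun _ => false) c v) (caApply f n u c (fun _ => false)))
        (caApply f n (fun _ => false) c (fun _ => false)) := by
  have h1 := key f hf n c u (fun _ => false) v v
  have h2 := key f hf n c u (fun _ => false) (fun _ => false) (fun _ => false)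
  rw [xor_self_fun n v] at h1
  rw [xor_self_fun n (fun _ => false)] at h2
  have h3 := h1.symm.trans h2
  revert h3
  generalize caApply f n u c v = a
  generalize caApply f n (fun _ => false) c v = b
  generalize caApply f n u c (fun _ => false) = d
  generalize caApply f n (fun _ => false) c (fun _ => false) = e
  generalize caApply f n (fun _ => false) false (fun _ => false) = z
  revert a b d e z; decide

lemma xor_left_comm' : ∀ a b c : Bool, xor a (xor b c) = xor b (xor a c) := by decide

lemma ncard_le_two {α : Type*} (S : Set α) (a b : α) (h : S ⊆ {a, b}) : S.ncard ≤ 2 := by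
  calc S.ncard ≤ ({a, b} : Set α).ncard := Set.ncard_le_ncard h ((Set.finite_singleton b).insert a)
    _ ≤ 1 + 1 := by
        simpa [Set.ncard_singleton] using Set.ncard_insert_le a ({b} : Set α)
    _ ≤ 2 := le_refl 2


/-- Rule 105, `f(x,c,y) = ¬(x ⊕ c ⊕ y)`, is additive with `⊕ = xor` (neutral element
`false`) and `⊗ = fun a b => ¬(a ⊕ b)`; consequently each matrix `M_c^n` of rule 105
has at most 2 distinct rows and at most 2 distinct columns. -/
theorem rule105_additive_bounded
    (f : Bool → Bool → Bool → Bool)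
    (hf : ∀ x c y : Bool, f x c y = !(xor (xor x c) y)) :
    (∀ x : Bool, xor x false = x ∧ xor false x = x) ∧
    (∀ x y z x' y' z' : Bool,
      f (xor x x') (xor y y') (xor z z') = !(xor (f x y z) (f x' y' z'))) ∧
    (∀ x y z x' y' z' : Bool,
      f (!(xor x x')) (!(xor y y')) (!(xor z z')) = xor (f x y z) (f x' y' z')) ∧
    (∀ n : ℕ, 1 ≤ n → ∀ c : Bool, caRows f n c ≤ 2 ∧ caCols f n c ≤ 2) := by
  refine ⟨by decide, ?_, ?_, ?_⟩
  · intro x y z x' y' z'; simp only [hf]; revert x y z x' y' z'; decide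
  · intro x y z x' y' z'; simp only [hf]; revert x y z x' y' z'; decide
  · intro n _ c
    constructor
    · apply ncard_le_two _
        (fun v => xor (caApply f n (fun _ => false) c v) false)
        (fun v => xor (caApply f n (fun _ => false) c v) true)
      rintro g ⟨u, rfl⟩
      rcases Bool.eq_false_or_eq_true
          (xor (caApply f n u c (fun _ => false))
            (caApply f n (fun _ => false) c (fun _ => false))) with h | h
      · right; funext v
        have haf := affine f hf n c u v
        rw [haf, Bool.xor_assoc, h]
      · left; funext v
        have haf := affine f hf n c u v
        rw [haf, Bool.xor_assoc, h]
    · apply ncard_le_two _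
        (fun u => xor (caApply f n u c (fun _ => false)) false)
        (fun u => xor (caApply f n u c (fun _ => false)) true)
      rintro g ⟨v, rfl⟩
      rcases Bool.eq_false_or_eq_true
          (xor (caApply f n (fun _ => false) c v)
            (caApply f n (fun _ => false) c (fun _ => false))) with h | h
      · right; funext u
        have haf := affine f hf n c u v
        rw [haf, Bool.xor_assoc, xor_left_comm' _ _ _, h]
      · left; funext u
        have haf := affine f hf n c u v
        rw [haf, Bool.xor_assoc, xor_left_comm' _ _ _, h]
end

section
/- Let f be the ECA of Wolfram rule 60, f(a,b,c) = a XOR b. If n + 1 is a power of 2, then for every assignment x of Boolean states to positions -n,…,n, f^n(x) equals the XOR of the n+1 cells x(-n), x(-n+1), …, x(0); that is, f^n computes the parity of the first n+1 cells. -/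
/-!
Rule 60 is linear over `𝔽₂` and ignores the right neighbour, so
`f^(n+1)(x) = f^n(x shifted) + f^n(x)`; by Pascal's rule `f^n(x) = ∑ᵢ C(n, i) x(-i)` in `ZMod 2`.
When `n = 2^m - 1` all the `C(n, i)` are odd (Lucas: every binary digit of `n` is `1`), so only
the parity of `x(-n), …, x(0)` remains.
-/

open Finset

theorem Finset.sum_range_succ_choose_nsmul {M : Type*} [AddCommMonoid M] (n : ℕ) (w : ℕ → M) :
    ∑ i ∈ range (n + 2), (n + 1).choose i • w i =
      ∑ i ∈ range (n + 1), n.choose i • w (i + 1) + ∑ i ∈ range (n + 1), n.choose i • w i := by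
  rw [sum_range_succ' _ (n + 1)]
  simp only [Nat.choose_succ_succ, add_nsmul, sum_add_distrib, Nat.choose_zero_right]
  rw [add_assoc, sum_range_succ (fun i => n.choose (i + 1) • w (i + 1)),
    Nat.choose_succ_self, zero_nsmul, add_zero, sum_range_succ' (fun i => n.choose i • w i),
    Nat.choose_zero_right]

theorem Nat.odd_choose_two_pow_sub_one {m k : ℕ} (hk : k < 2 ^ m) :
    Odd ((2 ^ m - 1).choose k) := by
  induction m generalizing k with
  | zero => simp_all
  | succ m ih =>
    have hn : (2 ^ (m + 1) - 1) % 2 = 1 ∧ (2 ^ (m + 1) - 1) / 2 = 2 ^ m - 1 := by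
      rw [pow_succ]; omega
    have hlow : (1 : ℕ).choose (k % 2) = 1 := by
      rcases Nat.mod_two_eq_zero_or_one k with h | h <;> rw [h] <;> rfl
    have hlucas : (2 ^ (m + 1) - 1).choose k ≡ (2 ^ m - 1).choose (k / 2) [MOD 2] := by
      simpa only [hn, hlow, one_mul] using Choose.choose_modEq_choose_mod_mul_choose_div_nat
        (n := 2 ^ (m + 1) - 1) (k := k) (p := 2)
    rw [Nat.odd_iff, hlucas, ← Nat.odd_iff]
    exact ih (by rw [pow_succ] at hk; omega)

theorem caIter_eq_sum_choose_of_eq_xor {f : Bool → Bool → Bool → Bool}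
    (hf : ∀ a b c : Bool, f a b c = xor a b) (n : ℕ) (x : ℤ → Bool) :
    (if caIter f n x then 1 else 0 : ZMod 2) =
      ∑ i ∈ range (n + 1), n.choose i • (if x (-i) then 1 else 0 : ZMod 2) := by
  induction n generalizing x with
  | zero =>
    rw [caIter, zero_add, sum_range_one, Nat.choose_zero_right, one_nsmul, Nat.cast_zero,
      neg_zero]
  | succ n ih =>
    have hxor : ∀ a b : Bool,
        (if xor a b then 1 else 0 : ZMod 2) = (if a then 1 else 0) + (if b then 1 else 0) := by
      decide
    rw [caIter, hf, hxor, ih, ih, sum_range_succ_choose_nsmul]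
    congr 1
    refine sum_congr rfl fun i _ => ?_
    push_cast
    ring_nf

theorem Bool.eq_decide_odd_iff (b : Bool) (k : ℕ) :
    b = decide (Odd k) ↔ (if b then 1 else 0 : ZMod 2) = k := by
  cases b <;> simp [eq_comm (a := (0 : ZMod 2)), eq_comm (a := (1 : ZMod 2)),
    ZMod.natCast_eq_zero_iff_even, ZMod.natCast_eq_one_iff_odd]

theorem rule60_parity_general (f : Bool → Bool → Bool → Bool)
    (hf : ∀ a b c : Bool, f a b c = xor a b)
    (n : ℕ) (hpow : ∃ m : ℕ, n + 1 = 2 ^ m) :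
    ∀ x : ℤ → Bool,
      caIter f n x =
        decide (Odd (((Finset.range (n + 1)).filter
          (fun i : ℕ => x (-(n : ℤ) + (i : ℤ)) = true)).card)) := by
  obtain ⟨m, hm⟩ := hpow
  intro x
  rw [Bool.eq_decide_odd_iff, caIter_eq_sum_choose_of_eq_xor hf, natCast_card_filter,
    ← sum_range_reflect]
  refine sum_congr rfl fun i hi_mem => ?_
  have hi : i ≤ n := Nat.lt_succ_iff.mp (mem_range.mp hi_mem)
  have hodd : Odd (n.choose (n + 1 - 1 - i)) := by
    obtain rfl : n = 2 ^ m - 1 := by omega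
    exact Nat.odd_choose_two_pow_sub_one (by omega)
  rw [nsmul_eq_mul, ZMod.natCast_eq_one_iff_odd.mpr hodd, one_mul]
  congr 3
  omega

/-- For rule 60, `f(a,b,c) = a ⊕ b`, if `n + 1` is a power of 2 then `f^n(x)` is the XOR
(parity of the number of `true`s) of the `n+1` cells `x(-n), x(-n+1), …, x(0)`. -/
theorem rule60_parity (f : Bool → Bool → Bool → Bool)
    (hf : ∀ a b c : Bool, f a b c = xor a b)
    (n : ℕ) (hn : 1 ≤ n) (hpow : ∃ m : ℕ, n + 1 = 2 ^ m) :
    ∀ x : ℤ → Bool,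
      caIter f n x =
        decide (Odd (((Finset.range (n + 1)).filter
          (fun i : ℕ => x (-(n : ℤ) + (i : ℤ)) = true)).card)) :=
  rule60_parity_general f hf n hpow
end

section
/- Let f be the ECA of Wolfram rule 132, f(a,b,c) = b && (a == c). For u : Fin n → Bool let t(u) be the largest k ≤ n such that u i = true for all i < k (the length of the run of trues of u adjacent to the center), and define t(v) likewise for v : Fin n → Bool. Then for every n ≥ 1 and all u, v : Fin n → Bool, f^n(u, true, v) = true if and only if t(u) = t(v). -/
/-- The length of the run of `true`s of `u` adjacent to the center: the largest `k ≤ n`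
such that `u i = true` for all `i < k`. -/
noncomputable def runLen {n : ℕ} (u : Fin n → Bool) : ℕ :=
  sSup {k : ℕ | k ≤ n ∧ ∀ i : Fin n, (i : ℕ) < k → u i = true}

def stepF (f : Bool → Bool → Bool → Bool) (x : ℤ → Bool) : ℤ → Bool :=
  fun i => f (x (i - 1)) (x i) (x (i + 1))

lemma caIter_succ_eq (f : Bool → Bool → Bool → Bool) (n : ℕ) (x : ℤ → Bool) :
    caIter f (n + 1) x = caIter f n (stepF f x) := by
  induction n generalizing x with
  | zero => rfl
  | succ n ih =>
    show f (caIter f (n+1) fun i => x (i-1)) (caIter f (n+1) x)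
        (caIter f (n+1) fun i => x (i+1))
      = f (caIter f n fun i => stepF f x (i-1)) (caIter f n (stepF f x))
        (caIter f n fun i => stepF f x (i+1))
    rw [ih, ih, ih]
    congr 1
    · congr 1; funext i; simp only [stepF]; congr 2 <;> omega
    · congr 1; funext i; simp only [stepF]; congr 2 <;> omega

lemma caIter_eq_iterate (f : Bool → Bool → Bool → Bool) (n : ℕ) (x : ℤ → Bool) :
    caIter f n x = (stepF f)^[n] x 0 := by
  induction n generalizing x with
  | zero => rfl
  | succ n ih => rw [caIter_succ_eq, ih, ← Function.iterate_succ_apply]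

lemma caIter_congr (f : Bool → Bool → Bool → Bool) (n : ℕ) (x y : ℤ → Bool)
    (h : ∀ i : ℤ, -(n:ℤ) ≤ i → i ≤ n → x i = y i) : caIter f n x = caIter f n y := by
  induction n generalizing x y with
  | zero => exact h 0 (by simp) (by simp)
  | succ n ih =>
    show f (caIter f n fun i => x (i-1)) (caIter f n x) (caIter f n fun i => x (i+1))
      = f (caIter f n fun i => y (i-1)) (caIter f n y) (caIter f n fun i => y (i+1))
    rw [ih _ _ (fun i h1 h2 => h (i-1) (by push_cast; omega) (by push_cast; omega)),
        ih x y (fun i h1 h2 => h i (by push_cast; omega) (by push_cast; omega)),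
        ih _ _ (fun i h1 h2 => h (i+1) (by push_cast; omega) (by push_cast; omega))]

lemma stepF_false (f : Bool → Bool → Bool → Bool)
    (hf : ∀ a b c : Bool, f a b c = (b && (a == c))) (t : ℕ) (x : ℤ → Bool) (j : ℤ)
    (h : x j = false) : (stepF f)^[t] x j = false := by
  induction t generalizing x with
  | zero => exact h
  | succ t ih =>
    rw [Function.iterate_succ_apply]
    exact ih _ (by simp [stepF, hf, h])

lemma block_lemma (f : Bool → Bool → Bool → Bool)
    (hf : ∀ a b c : Bool, f a b c = (b && (a == c))) :
    ∀ (t : ℕ) (x : ℤ → Bool) (a b i : ℤ), a ≤ i → i ≤ b →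
    (∀ j, a ≤ j → j ≤ b → x j = true) → x (a - 1) = false → x (b + 1) = false →
    ((stepF f)^[t] x i = true ↔ (i - a = b - i ∨ (t : ℤ) ≤ min (i - a) (b - i))) := by
  intro t
  induction t with
  | zero =>
    intro x a b i hai hib hblk hA hB
    simp only [Function.iterate_zero, id_eq, hblk i hai hib, Nat.cast_zero]
    constructor
    · intro _; right; omega
    · intro _; trivial
  | succ t ih =>
    intro x a b i hai hib hblk hA hB
    rw [Function.iterate_succ_apply]
    rcases eq_or_lt_of_le (le_trans hai hib) with heq | hlt
    · -- a = b, so i = a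
      have hia : i = a := by omega
      have hab : x (a + 1) = false := by rw [heq]; exact hB
      have h1 : ∀ j, a ≤ j → j ≤ a → stepF f x j = true := by
        intro j hj1 hj2
        rw [le_antisymm hj2 hj1]
        simp [stepF, hf, hA, hab, hblk a le_rfl heq.le]
      have h2 : stepF f x (a - 1) = false := by simp [stepF, hf, hA]
      have h3 : stepF f x (a + 1) = false := by simp [stepF, hf, hab]
      rw [ih (stepF f x) a a i hia.ge hia.le h1 h2 h3]
      omega
    · -- a < b
      have hA' : stepF f x a = false := by
        simp [stepF, hf, hA, hblk a le_rfl (by omega), hblk (a+1) (by omega) (by omega)]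
      have hB' : stepF f x b = false := by
        simp [stepF, hf, hB, hblk b (by omega) le_rfl, hblk (b-1) (by omega) (by omega)]
      rcases eq_or_lt_of_le hai with hia | hia
      · rw [← hia, stepF_false f hf t _ a hA']
        simp only [Bool.false_eq_true, false_iff]
        omega
      rcases eq_or_lt_of_le hib with hib2 | hib2
      · rw [hib2, stepF_false f hf t _ b hB']
        simp only [Bool.false_eq_true, false_iff]
        omega
      · have hblk' : ∀ j, a + 1 ≤ j → j ≤ b - 1 → stepF f x j = true := by
          intro j h1 h2
          simp [stepF, hf, hblk (j-1) (by omega) (by omega), hblk j (by omega) (by omega),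
            hblk (j+1) (by omega) (by omega)]
        have hA'' : stepF f x (a + 1 - 1) = false := by rw [show a+1-1 = a by ring]; exact hA'
        have hB'' : stepF f x (b - 1 + 1) = false := by rw [show b-1+1 = b by ring]; exact hB'
        rw [ih (stepF f x) (a+1) (b-1) i (by omega) (by omega) hblk' hA'' hB'']
        omega

lemma runLen_mem {n : ℕ} (u : Fin n → Bool) :
    runLen u ≤ n ∧ ∀ i : Fin n, (i : ℕ) < runLen u → u i = true := by
  have : sSup {k : ℕ | k ≤ n ∧ ∀ i : Fin n, (i : ℕ) < k → u i = true} ∈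
      {k : ℕ | k ≤ n ∧ ∀ i : Fin n, (i : ℕ) < k → u i = true} := by
    apply Nat.sSup_mem
    · exact ⟨0, by simp⟩
    · exact ⟨n, fun k hk => hk.1⟩
  exact this

lemma runLen_max {n : ℕ} (u : Fin n → Bool) (h : runLen u < n) :
    u ⟨runLen u, h⟩ = false := by
  by_contra hc
  have hc' : u ⟨runLen u, h⟩ = true := by simpa using hc
  have hmem : runLen u + 1 ∈ {k : ℕ | k ≤ n ∧ ∀ i : Fin n, (i : ℕ) < k → u i = true} := by
    refine ⟨h, fun i hi => ?_⟩
    rcases Nat.lt_or_ge (i : ℕ) (runLen u) with h1 | h1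
    · exact (runLen_mem u).2 i h1
    · have : (i : ℕ) = runLen u := by omega
      have : i = ⟨runLen u, h⟩ := Fin.ext this
      rw [this]; exact hc'
  have := le_csSup ⟨n, fun k hk => hk.1⟩ hmem
  have : runLen u + 1 ≤ runLen u := this
  omega

/-- For rule 132, `f(a,b,c) = b && (a == c)`, with center cell `true`:
`f^n(u, true, v) = true` iff the runs of `true`s adjacent to the center on the two
sides have equal lengths. -/
theorem rule132_center_true (f : Bool → Bool → Bool → Bool)
    (hf : ∀ a b c : Bool, f a b c = (b && (a == c))) :
    ∀ n : ℕ, 1 ≤ n → ∀ u v : Fin n → Bool,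
      caApply f n u true v = true ↔ runLen u = runLen v := by
  intro n hn u v
  have hlu := runLen_mem u
  have hrv := runLen_mem v
  set l := runLen u with hl
  set r := runLen v with hr
  set y : ℤ → Bool :=
    fun i => if -(n:ℤ) ≤ i ∧ i ≤ (n:ℤ) then caEmbed n u true v i else false with hy
  have hcong : caApply f n u true v = caIter f n y := by
    apply caIter_congr
    intro i h1 h2
    simp only [hy]
    rw [if_pos ⟨h1, h2⟩]
  have hblk : ∀ j : ℤ, -(l:ℤ) ≤ j → j ≤ (r:ℤ) → y j = true := by
    intro j h1 h2
    simp only [hy]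
    rw [if_pos (by constructor <;> omega)]
    rcases lt_trichotomy j 0 with hj | hj | hj
    · rw [caEmbed, dif_neg (by omega), dif_pos (show 1 ≤ -j ∧ -j ≤ (n:ℤ) by omega)]
      exact hlu.2 _ (show ((-j - 1).toNat) < l by omega)
    · subst hj
      rw [caEmbed, dif_neg (by omega), dif_neg (by omega)]
    · rw [caEmbed, dif_pos (show 1 ≤ j ∧ j ≤ (n:ℤ) by omega)]
      exact hrv.2 _ (show ((j - 1).toNat) < r by omega)
  have hA : y (-(l:ℤ) - 1) = false := by
    simp only [hy]
    rcases eq_or_lt_of_le hlu.1 with h | h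
    · rw [if_neg (by omega)]
    · rw [if_pos (by constructor <;> omega),
        caEmbed, dif_neg (by omega), dif_pos (show 1 ≤ -(-(l:ℤ)-1) ∧ -(-(l:ℤ)-1) ≤ (n:ℤ) by omega)]
      refine Eq.trans (congrArg u (Fin.ext ?_)) (runLen_max u h)
      show ((-(-(l:ℤ)-1) - 1).toNat) = l
      omega
  have hB : y ((r:ℤ) + 1) = false := by
    simp only [hy]
    rcases eq_or_lt_of_le hrv.1 with h | h
    · rw [if_neg (by omega)]
    · rw [if_pos (by constructor <;> omega),
        caEmbed, dif_pos (show 1 ≤ (r:ℤ)+1 ∧ (r:ℤ)+1 ≤ (n:ℤ) by omega)]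
      refine Eq.trans (congrArg v (Fin.ext ?_)) (runLen_max v h)
      show (((r:ℤ)+1 - 1).toNat) = r
      omega
  rw [hcong, caIter_eq_iterate,
    block_lemma f hf n y (-(l:ℤ)) (r:ℤ) 0 (by omega) (by omega) hblk hA hB]
  have h1 := hlu.1
  have h2 := hrv.1
  omega
end

section
/- Let f be the ECA of Wolfram rule 132, f(a,b,c) = b && (a == c). For 0 ≤ k ≤ n let w_k : Fin n → Bool be defined by w_k i = true iff i < k. Then for all 0 ≤ k, l ≤ n, f^n(w_k, true, w_l) = true if and only if k = l; consequently the matrix M_true^n of rule 132 has at least n+1 distinct rows and at least n+1 distinct columns. -/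
/-- `caIter f m` only depends on positions `-m,…,m`. -/
lemma caIter_congr_s10 {Q : Type*} (f : Q → Q → Q → Q) :
    ∀ (m : ℕ) (x y : ℤ → Q), (∀ i : ℤ, -(m : ℤ) ≤ i → i ≤ (m : ℤ) → x i = y i) →
      caIter f m x = caIter f m y := by
  intro m
  induction m with
  | zero => intro x y h; exact h 0 (by simp) (by simp)
  | succ m ih =>
    intro x y h
    simp only [caIter]
    rw [ih (fun i => x (i - 1)) (fun i => y (i - 1)) (by intro i h1 h2; apply h <;> push_cast <;> omega),
      ih x y (by intro i h1 h2; apply h <;> push_cast <;> omega),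
      ih (fun i => x (i + 1)) (fun i => y (i + 1)) (by intro i h1 h2; apply h <;> push_cast <;> omega)]

/-- Key computation for rule 132 on an interval configuration. -/
lemma rule132_key (f : Bool → Bool → Bool → Bool)
    (hf : ∀ a b c : Bool, f a b c = (b && (a == c))) :
    ∀ (m : ℕ) (a b : ℤ) (x : ℤ → Bool), (∀ i : ℤ, x i = decide (a ≤ i ∧ i ≤ b)) →
      (caIter f m x = true ↔ a ≤ 0 ∧ 0 ≤ b ∧ (a = -b ∨ (a ≤ -(m : ℤ) ∧ (m : ℤ) ≤ b))) := by
  intro m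
  induction m with
  | zero =>
    intro a b x h
    simp only [caIter, h 0, decide_eq_true_eq, Nat.cast_zero]
    omega
  | succ m ih =>
    intro a b x h
    simp only [caIter, hf, Bool.and_eq_true, beq_iff_eq]
    have hL := ih (a + 1) (b + 1) (fun i => x (i - 1))
      (by intro i; show x (i - 1) = _; rw [h (i - 1)]; simp only [decide_eq_decide]; omega)
    have hC := ih a b x h
    have hR := ih (a - 1) (b - 1) (fun i => x (i + 1))
      (by intro i; show x (i + 1) = _; rw [h (i + 1)]; simp only [decide_eq_decide]; omega)
    rw [hC]
    have hLR : (caIter f m fun i => x (i - 1)) = (caIter f m fun i => x (i + 1)) ↔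
        ((caIter f m fun i => x (i - 1)) = true ↔ (caIter f m fun i => x (i + 1)) = true) :=
      Bool.eq_iff_iff
    rw [hLR, hL, hR]
    push_cast
    omega

lemma rule132_apply (f : Bool → Bool → Bool → Bool)
    (hf : ∀ a b c : Bool, f a b c = (b && (a == c)))
    (w : ∀ n : ℕ, ℕ → Fin n → Bool)
    (hw : ∀ (n k : ℕ) (i : Fin n), w n k i = decide ((i : ℕ) < k))
    (n : ℕ) (hn : 1 ≤ n) (k l : ℕ) (hk : k ≤ n) (hl : l ≤ n) :
    caApply f n (w n k) true (w n l) = true ↔ k = l := by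
  have hcongr : caApply f n (w n k) true (w n l) =
      caIter f n (fun i => decide (-(k : ℤ) ≤ i ∧ i ≤ (l : ℤ))) := by
    apply caIter_congr_s10
    intro i h1 h2
    unfold caEmbed
    split_ifs with h h'
    · rw [hw]
      simp only [decide_eq_decide, Fin.val_mk]
      omega
    · rw [hw]
      simp only [decide_eq_decide, Fin.val_mk]
      omega
    · have : i = 0 := by omega
      subst this
      exact (decide_eq_true (by omega)).symm
  rw [hcongr, rule132_key f hf n (-(k : ℤ)) (l : ℤ) _ (fun i => rfl)]
  omega

/-- For rule 132, `f(a,b,c) = b && (a == c)`: with `w_k i = (i < k)`, we have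
`f^n(w_k, true, w_l) = true ↔ k = l` for `0 ≤ k, l ≤ n`; consequently `M_true^n` has at
least `n+1` distinct rows and at least `n+1` distinct columns. -/
theorem rule132_identity_submatrix (f : Bool → Bool → Bool → Bool)
    (hf : ∀ a b c : Bool, f a b c = (b && (a == c)))
    (w : ∀ n : ℕ, ℕ → Fin n → Bool)
    (hw : ∀ (n k : ℕ) (i : Fin n), w n k i = decide ((i : ℕ) < k)) :
    ∀ n : ℕ, 1 ≤ n →
      (∀ k l : ℕ, k ≤ n → l ≤ n →
        (caApply f n (w n k) true (w n l) = true ↔ k = l)) ∧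
      n + 1 ≤ caRows f n true ∧ n + 1 ≤ caCols f n true := by
  intro n hn
  have main : ∀ k l : ℕ, k ≤ n → l ≤ n →
      (caApply f n (w n k) true (w n l) = true ↔ k = l) :=
    fun k l hk hl => rule132_apply f hf w hw n hn k l hk hl
  refine ⟨main, ?_, ?_⟩
  · -- rows
    set S := {g : (Fin n → Bool) → Bool | ∃ u : Fin n → Bool, g = fun v => caApply f n u true v}
    let F : Fin (n + 1) → ((Fin n → Bool) → Bool) :=
      fun k => fun v => caApply f n (w n (k : ℕ)) true v
    have hFinj : Function.Injective F := by
      intro k k' hkk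
      have h1 : F k (w n (k' : ℕ)) = F k' (w n (k' : ℕ)) := by rw [hkk]
      have h2 : F k' (w n (k' : ℕ)) = true :=
        (main k' k' (by omega) (by omega)).mpr rfl
      have h3 : F k (w n (k' : ℕ)) = true := by rw [h1, h2]
      have := (main k k' (by omega) (by omega)).mp h3
      exact Fin.ext this
    have hsub : Set.range F ⊆ S := by
      rintro g ⟨k, rfl⟩
      exact ⟨w n (k : ℕ), rfl⟩
    calc n + 1 = (Set.range F).ncard := by
          rw [← Set.image_univ, Set.ncard_image_of_injective _ hFinj, Set.ncard_univ]; simp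
      _ ≤ S.ncard := Set.ncard_le_ncard hsub (Set.toFinite S)
  · -- cols
    set S := {g : (Fin n → Bool) → Bool | ∃ v : Fin n → Bool, g = fun u => caApply f n u true v}
    let F : Fin (n + 1) → ((Fin n → Bool) → Bool) :=
      fun l => fun u => caApply f n u true (w n (l : ℕ))
    have hFinj : Function.Injective F := by
      intro l l' hll
      have h1 : F l (w n (l' : ℕ)) = F l' (w n (l' : ℕ)) := by rw [hll]
      have h2 : F l' (w n (l' : ℕ)) = true :=
        (main l' l' (by omega) (by omega)).mpr rfl
      have h3 : F l (w n (l' : ℕ)) = true := by rw [h1, h2]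
      have := (main l' l (by omega) (by omega)).mp h3
      exact Fin.ext this.symm
    have hsub : Set.range F ⊆ S := by
      rintro g ⟨l, rfl⟩
      exact ⟨w n (l : ℕ), rfl⟩
    calc n + 1 = (Set.range F).ncard := by
          rw [← Set.image_univ, Set.ncard_image_of_injective _ hFinj, Set.ncard_univ]; simp
      _ ≤ S.ncard := Set.ncard_le_ncard hsub (Set.toFinite S)
end

section
/- Let f be the ECA of Wolfram rule 132, f(a,b,c) = b && (a == c). Then for every n ≥ 1, d_n(f) = n + 1. -/

def step132 (x : ℤ → Bool) : ℤ → Bool := fun i => x i && (x (i-1) == x (i+1))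

def Phi (x : ℤ → Bool) (n : ℕ) : Prop :=
  x 0 = true ∧ ∀ k : ℕ, 1 ≤ k → k ≤ n →
    (∀ j : ℕ, 1 ≤ j → j < k → x j = true ∧ x (-(j:ℤ)) = true) → x k = x (-(k:ℤ))

lemma step_pos (x : ℤ → Bool) (k : ℕ) (hk : 1 ≤ k) :
    step132 x k = (x k && (x ((k-1 : ℕ) : ℤ) == x ((k+1 : ℕ) : ℤ))) := by
  simp only [step132]
  rw [show ((k:ℤ) - 1) = ((k-1 : ℕ) : ℤ) by omega, show ((k:ℤ) + 1) = ((k+1 : ℕ) : ℤ) by omega]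

lemma step_neg (x : ℤ → Bool) (k : ℕ) (hk : 1 ≤ k) :
    step132 x (-(k:ℤ)) = (x (-(k:ℤ)) && (x (-((k+1 : ℕ) : ℤ)) == x (-((k-1 : ℕ) : ℤ)))) := by
  simp only [step132]
  rw [show (-(k:ℤ) - 1) = -((k+1 : ℕ) : ℤ) by omega, show (-(k:ℤ) + 1) = -((k-1 : ℕ) : ℤ) by omega]

lemma phi_step (x : ℤ → Bool) (n : ℕ) : Phi (step132 x) n ↔ Phi x (n+1) := by
  have h00 : step132 x 0 = (x 0 && (x (-1) == x 1)) := by norm_num [step132]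
  constructor
  · rintro ⟨h0, hk⟩
    rw [h00, Bool.and_eq_true, beq_iff_eq] at h0
    refine ⟨h0.1, fun k hk1 hkn prem => ?_⟩
    rcases eq_or_lt_of_le hk1 with h1 | h2
    · subst h1
      simpa using h0.2.symm
    · -- k ≥ 2
      have hx1 : x 1 = true ∧ x (-1) = true := by
        have := prem 1 le_rfl h2
        simpa using this
      have hprem' : ∀ j : ℕ, 1 ≤ j → j < k - 1 →
          step132 x j = true ∧ step132 x (-(j:ℤ)) = true := by
        intro j hj1 hj2
        rw [step_pos x j hj1, step_neg x j hj1]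
        have hxj := prem j hj1 (by omega)
        have hxjm : x ((j-1 : ℕ) : ℤ) = true ∧ x (-((j-1 : ℕ) : ℤ)) = true := by
          rcases Nat.eq_or_lt_of_le hj1 with h | h
          · constructor <;> · rw [show ((j-1 : ℕ) : ℤ) = 0 by omega]; exact h0.1
          · exact ⟨(prem (j-1) (by omega) (by omega)).1, (prem (j-1) (by omega) (by omega)).2⟩
        have hxjp : x ((j+1 : ℕ) : ℤ) = true ∧ x (-((j+1 : ℕ) : ℤ)) = true :=
          ⟨(prem (j+1) (by omega) (by omega)).1, (prem (j+1) (by omega) (by omega)).2⟩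
        rw [hxj.1, hxj.2, hxjm.1, hxjm.2, hxjp.1, hxjp.2]
        simp
      have hkey := hk (k-1) (by omega) (by omega) hprem'
      rw [step_pos x (k-1) (by omega), step_neg x (k-1) (by omega)] at hkey
      have e1 : x ((k-1 : ℕ) : ℤ) = true := (prem (k-1) (by omega) (by omega)).1
      have e2 : x (-((k-1 : ℕ) : ℤ)) = true := (prem (k-1) (by omega) (by omega)).2
      have e3 : x ((k-1-1 : ℕ) : ℤ) = true := by
        rcases Nat.lt_or_ge (k-1) 2 with h | h
        · rw [show ((k-1-1 : ℕ) : ℤ) = 0 by omega]; exact h0.1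
        · exact (prem (k-1-1) (by omega) (by omega)).1
      have e4 : x (-((k-1-1 : ℕ) : ℤ)) = true := by
        rcases Nat.lt_or_ge (k-1) 2 with h | h
        · rw [show (-((k-1-1 : ℕ) : ℤ)) = 0 by omega]; exact h0.1
        · exact (prem (k-1-1) (by omega) (by omega)).2
      rw [e1, e2, e3, e4, show k - 1 + 1 = k by omega] at hkey
      simpa using hkey
  · rintro ⟨h0, hk⟩
    have h1 : x 1 = x (-1) := by
      have := hk 1 le_rfl (by omega) (by intro j hj1 hj2; omega)
      simpa using this
    refine ⟨by rw [h00, h0, ← h1]; simp, fun k hk1 hkn prem => ?_⟩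
    -- premises in terms of x
    have premx : ∀ j : ℕ, 1 ≤ j → j < k → x j = true ∧ x (-(j:ℤ)) = true := by
      intro j hj1 hj2
      have := prem j hj1 hj2
      rw [step_pos x j hj1, step_neg x j hj1, Bool.and_eq_true, Bool.and_eq_true] at this
      exact ⟨this.1.1, this.2.1⟩
    have hsym : ∀ j : ℕ, j ≤ k → x j = x (-(j:ℤ)) := by
      intro j hj
      rcases Nat.eq_zero_or_pos j with h | h
      · subst h; norm_num
      · exact hk j h (by omega) (fun i hi1 hi2 => premx i hi1 (by omega))
    rw [step_pos x k hk1, step_neg x k hk1]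
    rcases Bool.eq_false_or_eq_true (x k) with hxk | hxk
    · have hxkm : x (-(k:ℤ)) = true := by rw [← hsym k le_rfl]; exact hxk
      have hnext : x ((k+1 : ℕ) : ℤ) = x (-((k+1 : ℕ) : ℤ)) := by
        apply hk (k+1) (by omega) (by omega)
        intro j hj1 hj2
        rcases Nat.lt_or_ge j k with h | h
        · exact premx j hj1 h
        · have : j = k := by omega
          subst this; exact ⟨hxk, hxkm⟩
      have hprev : x ((k-1 : ℕ) : ℤ) = x (-((k-1 : ℕ) : ℤ)) := hsym (k-1) (by omega)
      rw [hsym k le_rfl, hprev, hnext, Bool.beq_comm]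
    · rw [hxk, ← hsym k le_rfl, hxk]; simp

-- embed evaluation lemmas
lemma caEmbed_zero_s11 {Q : Type*} (n : ℕ) (u : Fin n → Q) (c : Q) (v : Fin n → Q) :
    caEmbed n u c v 0 = c := by
  simp [caEmbed]

lemma caEmbed_pos {Q : Type*} (n : ℕ) (u : Fin n → Q) (c : Q) (v : Fin n → Q)
    (k : ℕ) (h1 : 1 ≤ k) (h2 : k ≤ n) :
    caEmbed n u c v (k : ℤ) = v ⟨k - 1, by omega⟩ := by
  rw [caEmbed, dif_pos (by omega)]
  congr 1
  apply Fin.ext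
  show ((k:ℤ) - 1).toNat = k - 1
  omega

lemma caEmbed_neg {Q : Type*} (n : ℕ) (u : Fin n → Q) (c : Q) (v : Fin n → Q)
    (k : ℕ) (h1 : 1 ≤ k) (h2 : k ≤ n) :
    caEmbed n u c v (-(k : ℤ)) = u ⟨k - 1, by omega⟩ := by
  rw [caEmbed, dif_neg (by omega), dif_pos (by omega)]
  congr 1
  apply Fin.ext
  show (-(-(k:ℤ)) - 1).toNat = k - 1
  omega

-- center monotone: output true forces center true
lemma caIter_center (f : Bool → Bool → Bool → Bool)
    (hf : ∀ a b c : Bool, f a b c = (b && (a == c))) :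
    ∀ (n : ℕ) (x : ℤ → Bool), caIter f n x = true → x 0 = true := by
  intro n
  induction n with
  | zero => intro x h; exact h
  | succ n ih =>
    intro x h
    rw [show caIter f (n+1) x
        = f (caIter f n fun i => x (i - 1)) (caIter f n x) (caIter f n fun i => x (i + 1))
        from rfl, hf, Bool.and_eq_true] at h
    exact ih x h.1

lemma caApply_false (f : Bool → Bool → Bool → Bool)
    (hf : ∀ a b c : Bool, f a b c = (b && (a == c))) (n : ℕ)
    (u v : Fin n → Bool) : caApply f n u false v = false := by
  by_contra h
  have h' : caApply f n u false v = true := by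
    revert h; cases caApply f n u false v <;> simp
  have := caIter_center f hf n _ h'
  rw [caEmbed_zero_s11] at this
  exact Bool.false_ne_true this

-- prefix-of-ones length
def pref {n : ℕ} (w : Fin n → Bool) : ℕ :=
  Nat.find (p := fun k => n ≤ k ∨ ∃ i : Fin n, (i : ℕ) = k ∧ w i = false) ⟨n, Or.inl le_rfl⟩

lemma pref_le {n : ℕ} (w : Fin n → Bool) : pref w ≤ n :=
  Nat.find_le (Or.inl le_rfl)

lemma pref_lt_true {n : ℕ} (w : Fin n → Bool) (i : Fin n) (h : (i : ℕ) < pref w) :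
    w i = true := by
  have := Nat.find_min (p := fun k => n ≤ k ∨ ∃ i : Fin n, (i : ℕ) = k ∧ w i = false)
    ⟨n, Or.inl le_rfl⟩ h
  simp only [not_or, not_exists, not_and] at this
  have h2 := this.2 i rfl
  revert h2; cases w i <;> simp

lemma pref_self_false {n : ℕ} (w : Fin n → Bool) (h : pref w < n) :
    w ⟨pref w, h⟩ = false := by
  have := Nat.find_spec (p := fun k => n ≤ k ∨ ∃ i : Fin n, (i : ℕ) = k ∧ w i = false)
    ⟨n, Or.inl le_rfl⟩
  rcases this with h' | ⟨i, hi, hw⟩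
  · exact absurd h' (not_le.mpr h)
  · have hi' : (⟨pref w, h⟩ : Fin n) = i := Fin.ext hi.symm
    rw [hi']; exact hw

lemma pref_decide {n : ℕ} (j : ℕ) (hj : j ≤ n) :
    pref (fun i : Fin n => decide ((i : ℕ) < j)) = j := by
  apply le_antisymm
  · apply Nat.find_le
    rcases Nat.lt_or_ge j n with h | h
    · exact Or.inr ⟨⟨j, h⟩, rfl, by simp⟩
    · exact Or.inl h
  · rcases Nat.lt_or_ge (pref (fun i : Fin n => decide ((i : ℕ) < j))) j with h | h
    · exfalso
      have hlt : pref (fun i : Fin n => decide ((i : ℕ) < j)) < n := by omega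
      have := pref_self_false (fun i : Fin n => decide ((i : ℕ) < j)) hlt
      simp at this
      omega
    · exact h

lemma caIter_step (f : Bool → Bool → Bool → Bool)
    (hf : ∀ a b c : Bool, f a b c = (b && (a == c))) :
    ∀ (n : ℕ) (x : ℤ → Bool), caIter f (n+1) x = caIter f n (step132 x) := by
  intro n
  induction n with
  | zero => intro x; simp [caIter, step132, hf]
  | succ n ih =>
    intro x
    show f _ _ _ = f _ _ _
    rw [ih, ih, ih]
    congr 1
    · congr 1; funext i; simp only [step132]; ring_nf
    · congr 1; funext i; simp only [step132]; ring_nf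

-- caIter in terms of Phi
lemma caIter_phi (f : Bool → Bool → Bool → Bool)
    (hf : ∀ a b c : Bool, f a b c = (b && (a == c))) :
    ∀ (n : ℕ) (x : ℤ → Bool), caIter f n x = true ↔ Phi x n := by
  intro n
  induction n with
  | zero =>
    intro x
    exact ⟨fun h => ⟨h, fun k h1 h2 _ => by omega⟩, fun h => h.1⟩
  | succ n ih =>
    intro x
    rw [caIter_step f hf n x, ih, phi_step]

lemma fin_mk_eq {n a b : ℕ} (ha : a < n) (hb : b < n) (h : a = b) :
    (⟨a, ha⟩ : Fin n) = ⟨b, hb⟩ := by subst h; rfl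

lemma phi_embed (n : ℕ) (u v : Fin n → Bool) :
    Phi (caEmbed n u true v) n ↔ pref u = pref v := by
  constructor
  · rintro ⟨-, hC⟩
    by_contra hne
    rcases Nat.lt_or_ge (pref u) (pref v) with h | h
    · have hp : pref u < n := lt_of_lt_of_le h (pref_le v)
      have hprem : ∀ j : ℕ, 1 ≤ j → j < pref u + 1 →
          caEmbed n u true v (j : ℤ) = true ∧ caEmbed n u true v (-(j : ℤ)) = true := by
        intro j hj1 hj2
        rw [caEmbed_pos n u true v j hj1 (by omega), caEmbed_neg n u true v j hj1 (by omega)]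
        exact ⟨pref_lt_true v _ (by simp only [Fin.val_mk]; omega),
               pref_lt_true u _ (by simp only [Fin.val_mk]; omega)⟩
      have hres := hC (pref u + 1) (by omega) (by omega) hprem
      rw [caEmbed_pos n u true v (pref u + 1) (by omega) (by omega),
          caEmbed_neg n u true v (pref u + 1) (by omega) (by omega)] at hres
      have hv : v ⟨pref u + 1 - 1, by omega⟩ = true :=
        pref_lt_true v _ (by simp only [Fin.val_mk]; omega)
      have hu : u ⟨pref u + 1 - 1, by omega⟩ = false := by
        have e : (⟨pref u + 1 - 1, by omega⟩ : Fin n) = ⟨pref u, hp⟩ := fin_mk_eq _ _ (by omega)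
        rw [e]; exact pref_self_false u hp
      rw [hv, hu] at hres; exact Bool.false_ne_true hres.symm
    · have h' : pref v < pref u := lt_of_le_of_ne h (fun e => hne e.symm)
      have hp : pref v < n := lt_of_lt_of_le h' (pref_le u)
      have hprem : ∀ j : ℕ, 1 ≤ j → j < pref v + 1 →
          caEmbed n u true v (j : ℤ) = true ∧ caEmbed n u true v (-(j : ℤ)) = true := by
        intro j hj1 hj2
        rw [caEmbed_pos n u true v j hj1 (by omega), caEmbed_neg n u true v j hj1 (by omega)]
        exact ⟨pref_lt_true v _ (by simp only [Fin.val_mk]; omega),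
               pref_lt_true u _ (by simp only [Fin.val_mk]; omega)⟩
      have hres := hC (pref v + 1) (by omega) (by omega) hprem
      rw [caEmbed_pos n u true v (pref v + 1) (by omega) (by omega),
          caEmbed_neg n u true v (pref v + 1) (by omega) (by omega)] at hres
      have hu : u ⟨pref v + 1 - 1, by omega⟩ = true :=
        pref_lt_true u _ (by simp only [Fin.val_mk]; omega)
      have hv : v ⟨pref v + 1 - 1, by omega⟩ = false := by
        have e : (⟨pref v + 1 - 1, by omega⟩ : Fin n) = ⟨pref v, hp⟩ := fin_mk_eq _ _ (by omega)
        rw [e]; exact pref_self_false v hp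
      rw [hv, hu] at hres; exact Bool.false_ne_true hres
  · intro heq
    refine ⟨caEmbed_zero_s11 n u true v, fun k hk1 hkn prem => ?_⟩
    rw [caEmbed_pos n u true v k hk1 hkn, caEmbed_neg n u true v k hk1 hkn]
    rcases Nat.lt_trichotomy (k - 1) (pref u) with h | h | h
    · rw [pref_lt_true v _ (by simp only [Fin.val_mk]; omega),
          pref_lt_true u _ (by simp only [Fin.val_mk]; omega)]
    · have hp : pref u < n := by omega
      have hpv : pref v < n := by omega
      have hu : u ⟨k - 1, by omega⟩ = false := by
        have e : (⟨k - 1, by omega⟩ : Fin n) = ⟨pref u, hp⟩ := fin_mk_eq _ _ (by omega)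
        rw [e]; exact pref_self_false u hp
      have hv : v ⟨k - 1, by omega⟩ = false := by
        have e : (⟨k - 1, by omega⟩ : Fin n) = ⟨pref v, hpv⟩ := fin_mk_eq _ _ (by omega)
        rw [e]; exact pref_self_false v hpv
      rw [hu, hv]
    · exfalso
      have hp : pref u < n := by omega
      have := (prem (pref u + 1) (by omega) (by omega)).2
      rw [caEmbed_neg n u true v (pref u + 1) (by omega) (by omega)] at this
      have e1 : (⟨pref u + 1 - 1, by omega⟩ : Fin n) = ⟨pref u, hp⟩ := fin_mk_eq _ _ (by omega)
      rw [e1, pref_self_false u hp] at this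
      exact Bool.false_ne_true this

lemma caApply_true (f : Bool → Bool → Bool → Bool)
    (hf : ∀ a b c : Bool, f a b c = (b && (a == c))) (n : ℕ) (u v : Fin n → Bool) :
    caApply f n u true v = decide (pref u = pref v) := by
  have h : caApply f n u true v = true ↔ pref u = pref v :=
    (caIter_phi f hf n (caEmbed n u true v)).trans (phi_embed n u v)
  rw [Bool.eq_iff_iff, h, decide_eq_true_eq]

lemma rows_true (f : Bool → Bool → Bool → Bool)
    (hf : ∀ a b c : Bool, f a b c = (b && (a == c))) (n : ℕ) :
    {g : (Fin n → Bool) → Bool | ∃ u, g = fun v => caApply f n u true v}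
      = Set.range (fun j : Fin (n+1) => fun w : Fin n → Bool => decide (pref w = (j:ℕ))) := by
  ext g
  simp only [Set.mem_setOf_eq, Set.mem_range]
  constructor
  · rintro ⟨u, rfl⟩
    refine ⟨⟨pref u, by have := pref_le u; omega⟩, ?_⟩
    funext v
    rw [caApply_true f hf n u v]
    simp only [Fin.val_mk, decide_eq_decide]
    exact eq_comm
  · rintro ⟨j, rfl⟩
    refine ⟨fun i => decide ((i:ℕ) < (j:ℕ)), ?_⟩
    funext v
    rw [caApply_true f hf, pref_decide (j:ℕ) (by omega)]
    simp only [decide_eq_decide]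
    exact eq_comm

lemma cols_true (f : Bool → Bool → Bool → Bool)
    (hf : ∀ a b c : Bool, f a b c = (b && (a == c))) (n : ℕ) :
    {g : (Fin n → Bool) → Bool | ∃ v, g = fun u => caApply f n u true v}
      = Set.range (fun j : Fin (n+1) => fun w : Fin n → Bool => decide (pref w = (j:ℕ))) := by
  ext g
  simp only [Set.mem_setOf_eq, Set.mem_range]
  constructor
  · rintro ⟨v, rfl⟩
    refine ⟨⟨pref v, by have := pref_le v; omega⟩, ?_⟩
    funext u
    rw [caApply_true f hf n u v]
  · rintro ⟨j, rfl⟩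
    refine ⟨fun i => decide ((i:ℕ) < (j:ℕ)), ?_⟩
    funext u
    rw [caApply_true f hf, pref_decide (j:ℕ) (by omega)]

lemma F_inj (n : ℕ) :
    Function.Injective (fun j : Fin (n+1) => fun w : Fin n → Bool => decide (pref w = (j:ℕ))) := by
  intro j j' h
  have hle : (j : ℕ) ≤ n := Nat.lt_succ_iff.mp j.isLt
  have := congrFun h (fun i : Fin n => decide ((i:ℕ) < (j:ℕ)))
  simp only [pref_decide (j:ℕ) hle, decide_eq_decide] at this
  exact Fin.ext (this.mp trivial)

lemma set_rows_false (f : Bool → Bool → Bool → Bool)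
    (hf : ∀ a b c : Bool, f a b c = (b && (a == c))) (n : ℕ) :
    {g : (Fin n → Bool) → Bool | ∃ u, g = fun v => caApply f n u false v}
      = {fun _ => false} := by
  ext g
  simp only [Set.mem_setOf_eq, Set.mem_singleton_iff]
  constructor
  · rintro ⟨u, rfl⟩; funext v; exact caApply_false f hf n u v
  · rintro rfl; exact ⟨fun _ => false, by funext v; exact (caApply_false f hf n _ v).symm⟩

lemma set_cols_false (f : Bool → Bool → Bool → Bool)
    (hf : ∀ a b c : Bool, f a b c = (b && (a == c))) (n : ℕ) :
    {g : (Fin n → Bool) → Bool | ∃ v, g = fun u => caApply f n u false v}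
      = {fun _ => false} := by
  ext g
  simp only [Set.mem_setOf_eq, Set.mem_singleton_iff]
  constructor
  · rintro ⟨v, rfl⟩; funext u; exact caApply_false f hf n u v
  · rintro rfl; exact ⟨fun _ => false, by funext u; exact (caApply_false f hf n u _).symm⟩

/-- For rule 132, `f(a,b,c) = b && (a == c)`, we have `d_n(f) = n + 1` for all `n ≥ 1`. -/
theorem rule132_dn (f : Bool → Bool → Bool → Bool)
    (hf : ∀ a b c : Bool, f a b c = (b && (a == c))) :
    ∀ n : ℕ, 1 ≤ n → dnECA f n = n + 1 := by
  intro n hn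
  have hr1 : caRows f n false = 1 := by
    rw [caRows, set_rows_false f hf n, Set.ncard_singleton]
  have hc1 : caCols f n false = 1 := by
    rw [caCols, set_cols_false f hf n, Set.ncard_singleton]
  have hr2 : caRows f n true = n + 1 := by
    rw [caRows, rows_true f hf n, ← Set.image_univ,
        Set.ncard_image_of_injective _ (F_inj n), Set.ncard_univ,
        Nat.card_eq_fintype_card, Fintype.card_fin]
  have hc2 : caCols f n true = n + 1 := by
    rw [caCols, cols_true f hf n, ← Set.image_univ,
        Set.ncard_image_of_injective _ (F_inj n), Set.ncard_univ,
        Nat.card_eq_fintype_card, Fintype.card_fin]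
  rw [dnECA, hr1, hc1, hr2, hc2]
  omega
end

section
/- Let g be the 3-state cellular automaton on states Fin 3 defined by g(i,j,k) = 0 if j = 0 and i = k, and g(i,j,k) = max(i, max(j, k)) otherwise. Then for every n ≥ 1 and all u, v : Fin n → Fin 3, g^n(u, 1, v) = 1 if and only if no entry of u equals 2 and no entry of v equals 2. -/
def caStep {Q : Type*} (f : Q → Q → Q → Q) (x : ℤ → Q) : ℤ → Q :=
  fun p => f (x (p - 1)) (x p) (x (p + 1))

theorem caIter_succ' {Q : Type*} (f : Q → Q → Q → Q) :
    ∀ (n : ℕ) (x : ℤ → Q), caIter f (n + 1) x = caIter f n (caStep f x)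
  | 0, x => by
      simp only [caIter, caStep]
  | n + 1, x => by
      show f (caIter f (n+1) fun i => x (i - 1)) (caIter f (n+1) x)
            (caIter f (n+1) fun i => x (i + 1))
        = f (caIter f n fun i => caStep f x (i - 1)) (caIter f n (caStep f x))
            (caIter f n fun i => caStep f x (i + 1))
      rw [caIter_succ' f n (fun i => x (i - 1)), caIter_succ' f n x,
        caIter_succ' f n (fun i => x (i + 1))]
      congr 1
      · apply congrArg
        funext p
        simp only [caStep]
        congr 1 <;> ring_nf
      · apply congrArg
        funext p
        simp only [caStep]
        congr 1 <;> ring_nf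

section facts
variable (g : Fin 3 → Fin 3 → Fin 3 → Fin 3)
    (hg : ∀ i j k : Fin 3, g i j k = if j = 0 ∧ i = k then 0 else max i (max j k))

include hg

lemma gf1 : ∀ i j k : Fin 3, i ≤ 1 → j ≤ 1 → k ≤ 1 → g i j k ≤ 1 := by
  intro i j k; rw [hg]; revert i j k; decide

lemma gf2 : ∀ i k : Fin 3, i ≤ 1 → k ≤ 1 → g i 1 k = 1 := by
  intro i k; rw [hg]; revert i k; decide

lemma gf3 : ∀ i j k : Fin 3, j ≠ 0 → g i j k ≠ 0 := by
  intro i j k; rw [hg]; revert i j k; decide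

lemma gf4 : ∀ i k : Fin 3, g i 2 k = 2 := by
  intro i k; rw [hg]; revert i k; decide

lemma gf5 : ∀ i j k : Fin 3, j ≠ 0 → (i = 2 ∨ k = 2) → g i j k = 2 := by
  intro i j k; rw [hg]; revert i j k; decide

lemma gf6 : ∀ i j k : Fin 3, (i = 2 ∧ k ≠ 2) ∨ (k = 2 ∧ i ≠ 2) → g i j k = 2 := by
  intro i j k; rw [hg]; revert i j k; decide

lemma gf7 : ∀ i j k : Fin 3, i ≠ 2 → j ≠ 2 → k ≠ 2 → g i j k ≠ 2 := by
  intro i j k; rw [hg]; revert i j k; decide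

/-- if all states in sight are ≤ 1 and the center is 1, the result is 1 -/
lemma lemB : ∀ (n : ℕ) (x : ℤ → Fin 3), (∀ p, x p ≤ 1) → x 0 = 1 → caIter g n x = 1 := by
  intro n
  induction n with
  | zero => intro x _ h0; exact h0
  | succ n ih =>
      intro x hle h0
      rw [caIter_succ']
      refine ih _ (fun p => gf1 g hg _ _ _ (hle _) (hle _) (hle _)) ?_
      show g (x (0 - 1)) (x 0) (x (0 + 1)) = 1
      rw [h0]
      exact gf2 g hg _ _ (hle _) (hle _)

/-- if the nearest 2 is at distance d ≤ n and the center is nonzero, result is 2 -/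
lemma lemF : ∀ (n d : ℕ) (x : ℤ → Fin 3), d ≤ n → x 0 ≠ 0 →
    (∃ p : ℤ, p.natAbs = d ∧ x p = 2) → (∀ q : ℤ, q.natAbs < d → x q ≠ 2) →
    caIter g n x = 2 := by
  intro n
  induction n with
  | zero =>
      rintro d x hdn h0 ⟨p, hp, hp2⟩ _
      interval_cases d
      have : p = 0 := by omega
      subst this
      exact hp2
  | succ n ih =>
      rintro d x hdn h0 ⟨p, hp, hp2⟩ hmin
      rw [caIter_succ']
      have hstep : ∀ q : ℤ, caStep g x q = g (x (q - 1)) (x q) (x (q + 1)) := fun _ => rfl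
      rcases Nat.eq_zero_or_pos d with hd0 | hdpos
      · -- center is 2
        subst hd0
        have hp0 : p = 0 := by omega
        subst hp0
        refine ih 0 _ (by omega) ?_ ⟨0, rfl, ?_⟩ (by omega)
        · rw [hstep]; exact gf3 g hg _ _ _ (by rw [hp2]; decide)
        · rw [hstep, hp2]; exact gf4 g hg _ _
      · -- nearest 2 at distance d ≥ 1; it advances to distance d - 1
        obtain ⟨e, rfl⟩ : ∃ e, d = e + 1 := ⟨d - 1, by omega⟩
        have hc0 : caStep g x 0 ≠ 0 := by rw [hstep]; exact gf3 g hg _ _ _ h0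
        have hmin' : ∀ q : ℤ, q.natAbs < e → caStep g x q ≠ 2 := by
          intro q hq
          rw [hstep]
          exact gf7 g hg _ _ _ (hmin _ (by omega)) (hmin _ (by omega)) (hmin _ (by omega))
        have hwit : ∃ p' : ℤ, p'.natAbs = e ∧ caStep g x p' = 2 := by
          rcases Int.natAbs_eq p with hpe | hpe
          · -- p = e + 1
            refine ⟨(e : ℤ), by simp, ?_⟩
            rw [hstep]
            have hk : x ((e : ℤ) + 1) = 2 := by rw [show ((e:ℤ)+1) = p by omega]; exact hp2
            rcases Nat.eq_zero_or_pos e with he | he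
            · subst he
              exact gf5 g hg _ _ _ (by simpa using h0) (Or.inr hk)
            · exact gf6 g hg _ _ _ (Or.inr ⟨hk, hmin _ (by omega)⟩)
          · -- p = -(e + 1)
            refine ⟨-(e : ℤ), by simp, ?_⟩
            rw [hstep]
            have hi : x (-(e : ℤ) - 1) = 2 := by rw [show (-(e:ℤ)-1) = p by omega]; exact hp2
            rcases Nat.eq_zero_or_pos e with he | he
            · subst he
              exact gf5 g hg _ _ _ (by simpa using h0) (Or.inl (by simpa using hi))
            · exact gf6 g hg _ _ _ (Or.inl ⟨hi, hmin _ (by omega)⟩)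
        exact ih e _ (by omega) hc0 hwit hmin'
end facts

/-- For the 3-state CA `g(i,j,k) = 0` if `j = 0 ∧ i = k` and `max i (max j k)` otherwise:
a cell in state `1` remains in state `1` after `n` steps iff no cell among its `n` left
and `n` right neighbors is in state `2`. -/
theorem threeState_center_one (g : Fin 3 → Fin 3 → Fin 3 → Fin 3)
    (hg : ∀ i j k : Fin 3, g i j k = if j = 0 ∧ i = k then 0 else max i (max j k)) :
    ∀ n : ℕ, 1 ≤ n → ∀ u v : Fin n → Fin 3,
      (caApply g n u 1 v = 1 ↔ (∀ i : Fin n, u i ≠ 2) ∧ (∀ i : Fin n, v i ≠ 2)) := by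
  intro n hn u v
  set x := caEmbed n u 1 v with hxdef
  have hx0 : x 0 = 1 := by
    rw [hxdef, caEmbed]
    rw [dif_neg (by omega), dif_neg (by omega)]
  have hxu : ∀ i : Fin n, x (-((i : ℤ) + 1)) = u i := by
    intro i
    rw [hxdef, caEmbed]
    rw [dif_neg (by omega), dif_pos (by constructor <;> omega)]
    congr 1
    ext
    simp
  have hxv : ∀ i : Fin n, x ((i : ℤ) + 1) = v i := by
    intro i
    rw [hxdef, caEmbed]
    rw [dif_pos (by constructor <;> omega)]
    congr 1
    ext
    simp
  have key : ∀ m : ℕ, m ≤ n → (x m = 2 ∨ x (-(m : ℤ)) = 2) → caApply g n u 1 v = 2 := by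
    intro m hmn hm
    have hEx : ∃ k : ℕ, x (k : ℤ) = 2 ∨ x (-(k : ℤ)) = 2 := ⟨m, hm⟩
    classical
    set d := Nat.find hEx with hd
    have hdm : d ≤ m := Nat.find_min' hEx hm
    have hspec := Nat.find_spec hEx
    have hwit : ∃ p : ℤ, p.natAbs = d ∧ x p = 2 := by
      rcases hspec with h | h
      · exact ⟨(d : ℤ), by simp, h⟩
      · exact ⟨-(d : ℤ), by simp, h⟩
    have hmin : ∀ q : ℤ, q.natAbs < d → x q ≠ 2 := by
      intro q hq hq2
      refine Nat.find_min hEx hq ?_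
      rcases Int.natAbs_eq q with he | he
      · exact Or.inl (by rw [← he]; exact hq2)
      · exact Or.inr (by rw [← he]; exact hq2)
    exact lemF g hg n d x (by omega) (by rw [hx0]; decide) hwit hmin
  constructor
  · intro h1
    constructor
    · intro i hi
      have := key (i + 1) (by omega) (Or.inr (by rw [show (-((i:ℕ)+1:ℕ) : ℤ) = -((i:ℤ)+1) by push_cast; ring, hxu, hi]))
      rw [caApply] at h1
      rw [caApply] at this
      rw [h1] at this
      exact absurd this (by decide)
    · intro i hi
      have := key (i + 1) (by omega) (Or.inl (by rw [show (((i:ℕ)+1:ℕ) : ℤ) = (i:ℤ)+1 by push_cast; ring, hxv, hi]))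
      rw [caApply] at h1
      rw [caApply] at this
      rw [h1] at this
      exact absurd this (by decide)
  · rintro ⟨hu, hv⟩
    have hne2 : ∀ a : Fin 3, a ≠ 2 → a ≤ 1 := by decide
    have hle : ∀ p : ℤ, x p ≤ 1 := by
      intro p
      rw [hxdef, caEmbed]
      split_ifs with h h'
      · exact hne2 _ (hv _)
      · exact hne2 _ (hu _)
      · decide
    exact lemB g hg n x hle hx0
end
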